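/- arXiv:2408.02488 — 2 statements merged into one kernel-verified Lean document; each statement's English description precedes it below -/
import Mathlib

section
/- Two n-vertex graphs G and H are generalized cospectral if and only if G is cospectral with H and the overgraph G+e is cospectral with the overgraph H+e, where e denotes the all-ones vector of dimension n. -/
open Matrix

noncomputable section

/-- The adjacency matrix of the complement graph: `J - I - A`. -/
def complMat {V : Type} [Fintype V] [DecidableEq V] (A : Matrix V V ℝ) : Matrix V V ℝ :=
  (Matrix.of fun _ _ => (1 : ℝ)) - 1 - A

/-- Two graphs, given by their adjacency matrices, are generalized cospectral if they are
cospectral and their complements are cospectral. -/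
def GenCospectral {V : Type} [Fintype V] [DecidableEq V] (A B : Matrix V V ℝ) : Prop :=
  A.charpoly = B.charpoly ∧ (complMat A).charpoly = (complMat B).charpoly

/-- The bordered matrix `[[A, b], [bᵀ, 0]]` (adjacency matrix of the overgraph `G + b`). -/
def border {V : Type} [Fintype V] [DecidableEq V] (A : Matrix V V ℝ) (b : V → ℝ) :
    Matrix (V ⊕ Unit) (V ⊕ Unit) ℝ :=
  Matrix.fromBlocks A (Matrix.of fun i _ => b i) (Matrix.of fun _ j => b j) 0

/-!
Off the spectrum of `A`, write `w(x) = eᵀ (xI - A)⁻¹ e`. The Schur complement of the corner of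
`xI - (G + e)` gives `χ(G + e; x) = χ(G; x) (x - w(x))`, and since the complement `Ḡ` has adjacency
matrix `J - I - A` with `J = e eᵀ`, the matrix determinant lemma gives
`χ(Ḡ; -x - 1) = (-1)ⁿ χ(G; x) (1 + w(x))`. So once `χ(G) = χ(H)`, each of the two remaining
conditions says exactly that `w_G = w_H` off the finitely many common eigenvalues.
-/

open Polynomial

lemma Polynomial.eq_iff_of_eval_eq_mul {R : Type*} [CommRing R] [IsDomain R] [Infinite R]
    {P Q c : R[X]} (hc : c ≠ 0) {f : R → R} (hf : f.Injective) {u v : R → R}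
    (hP : ∀ x, c.eval x ≠ 0 → P.eval (f x) = c.eval x * u x)
    (hQ : ∀ x, c.eval x ≠ 0 → Q.eval (f x) = c.eval x * v x) :
    P = Q ↔ ∀ x, c.eval x ≠ 0 → u x = v x := by
  refine ⟨fun h x hx => mul_left_cancel₀ hx ?_, fun h => eq_of_infinite_eval_eq P Q ?_⟩
  · rw [← hP x hx, ← hQ x hx, h]
  · have hcofinite : {x | c.eval x ≠ 0}.Infinite := (finite_setOfPred_isRoot hc).infinite_compl
    refine (hcofinite.image hf.injOn).mono ?_
    rintro _ ⟨x, hx, rfl⟩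
    simp only [Set.mem_ofPred_eq, hP x hx, hQ x hx, h x hx]

lemma Matrix.replicateRow_mul_mul_replicateCol_apply {m n ι R : Type*} [Fintype m] [Fintype n]
    [CommRing R] (u : m → R) (M : Matrix m n R) (v : n → R) (i j : ι) :
    (replicateRow ι u * M * replicateCol ι v) i j = u ⬝ᵥ M *ᵥ v := by
  rw [Matrix.mul_assoc, ← replicateCol_mulVec, replicateRow_mul_replicateCol_apply]

section Overgraph

variable {V : Type} [Fintype V] [DecidableEq V]

/-- `bᵀ (xI - A)⁻¹ b`; for `b = e` and `|x| > ‖A‖` this is the walk generating function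
`∑ₖ (eᵀ Aᵏ e) / xᵏ⁺¹`. -/
def resolventQuadForm (A : Matrix V V ℝ) (b : V → ℝ) (x : ℝ) : ℝ :=
  b ⬝ᵥ (scalar V x - A)⁻¹ *ᵥ b

lemma eval_charpoly_border (A : Matrix V V ℝ) (b : V → ℝ) {x : ℝ}
    (hx : A.charpoly.eval x ≠ 0) :
    (border A b).charpoly.eval x = A.charpoly.eval x * (x - resolventQuadForm A b x) := by
  rw [eval_charpoly] at hx ⊢
  have hblocks : scalar (V ⊕ Unit) x - border A b =
      fromBlocks (scalar V x - A) (-replicateCol Unit b) (-replicateRow Unit b) (scalar Unit x) := by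
    ext (i | i) (j | j) <;> simp [border, scalar_apply, diagonal_apply, replicateCol, replicateRow]
  let := invertibleOfIsUnitDet _ (isUnit_iff_ne_zero.mpr hx)
  rw [hblocks, det_fromBlocks₁₁, ← eval_charpoly, det_unique, invOf_eq_nonsing_inv]
  simp only [Matrix.neg_mul, Matrix.mul_neg, neg_neg, Matrix.sub_apply,
    replicateRow_mul_mul_replicateCol_apply]
  simp [resolventQuadForm]

lemma eval_charpoly_complMat (A : Matrix V V ℝ) {x : ℝ} (hx : A.charpoly.eval x ≠ 0) :
    (complMat A).charpoly.eval (-(x + 1)) =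
      A.charpoly.eval x * ((-1) ^ Fintype.card V * (1 + resolventQuadForm A (fun _ => 1) x)) := by
  rw [eval_charpoly] at hx ⊢
  have hneg : scalar V (-(x + 1)) - complMat A =
      -(scalar V x - A + replicateCol Unit (fun _ : V => (1 : ℝ)) *
        replicateRow Unit (fun _ : V => (1 : ℝ))) := by
    ext i j
    by_cases h : i = j <;>
      simp [complMat, scalar_apply, mul_apply, replicateCol, replicateRow, h] <;> ring
  rw [hneg, det_neg, det_add_replicateCol_mul_replicateRow (isUnit_iff_ne_zero.mpr hx),
    ← eval_charpoly, det_unique, Matrix.add_apply, one_apply_eq, replicateRow_mul_mul_replicateCol_apply]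
  simp only [resolventQuadForm]
  ring

variable {A B : Matrix V V ℝ}

lemma charpoly_border_eq_iff (b : V → ℝ) (hAB : A.charpoly = B.charpoly) :
    (border A b).charpoly = (border B b).charpoly ↔
      ∀ x, A.charpoly.eval x ≠ 0 → resolventQuadForm A b x = resolventQuadForm B b x := by
  rw [Polynomial.eq_iff_of_eval_eq_mul A.charpoly_monic.ne_zero Function.injective_id
    (fun x hx => eval_charpoly_border A b hx)
    (fun x hx => hAB ▸ eval_charpoly_border B b (hAB ▸ hx))]
  exact forall₂_congr fun x _ => sub_right_inj

lemma charpoly_complMat_eq_iff (hAB : A.charpoly = B.charpoly) :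
    (complMat A).charpoly = (complMat B).charpoly ↔
      ∀ x, A.charpoly.eval x ≠ 0 →
        resolventQuadForm A (fun _ => 1) x = resolventQuadForm B (fun _ => 1) x := by
  rw [Polynomial.eq_iff_of_eval_eq_mul A.charpoly_monic.ne_zero
    (neg_injective.comp (add_left_injective 1))
    (fun x hx => eval_charpoly_complMat A hx)
    (fun x hx => hAB ▸ eval_charpoly_complMat B (hAB ▸ hx))]
  exact forall₂_congr fun x _ =>
    (mul_right_inj' (pow_ne_zero _ (neg_ne_zero.mpr one_ne_zero))).trans (add_right_inj 1)

end Overgraph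

theorem genCospectral_iff_overgraph_allOnes_cospectral_general
    {n : ℕ} (A B : Matrix (Fin n) (Fin n) ℝ) :
    GenCospectral A B ↔
      A.charpoly = B.charpoly ∧
        (border A fun _ => (1 : ℝ)).charpoly = (border B fun _ => (1 : ℝ)).charpoly :=
  and_congr_right fun hAB =>
    (charpoly_complMat_eq_iff hAB).trans (charpoly_border_eq_iff _ hAB).symm

/-- Corollary 4. Two graphs `G` and `H` are generalized cospectral if and
only if `G` is cospectral with `H` and the overgraph `G + e` is cospectral with `H + e`. -/
theorem genCospectral_iff_overgraph_allOnes_cospectral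
    {n : ℕ} (A B : Matrix (Fin n) (Fin n) ℝ)
    (hA : A.IsAdjMatrix) (hB : B.IsAdjMatrix) :
    GenCospectral A B ↔
      A.charpoly = B.charpoly ∧
        (border A fun _ => (1 : ℝ)).charpoly = (border B fun _ => (1 : ℝ)).charpoly :=
  genCospectral_iff_overgraph_allOnes_cospectral_general A B
end
end

section
/- Let G be an n-vertex graph whose adjacency matrix A has distinct eigenvalues λ₁,…,λ_m with spectral projections E₁,…,E_m. Then for every real x such that x+1+λᵢ ≠ 0 for all i, the characteristic polynomial of the complement satisfies χ(Ḡ; x) = (−1)ⁿ χ(G; −x−1) · (1 − Σᵢ₌₁^m eᵀEᵢe/(x + 1 + λᵢ)), where e is the all-ones vector. -/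
/-!
Writing `J = e eᵀ`, the matrix `xI - Ā` equals `M - e eᵀ` with `M = (x + 1)I + A`, so the
matrix determinant lemma gives `χ(Ḡ; x) = det M · (1 - eᵀ M⁻¹ e)`, where
`det M = (-1)ⁿ χ(G; -x-1)`. The spectral decomposition inverts `M` explicitly:
`M⁻¹ = ∑ᵢ (x + 1 + λᵢ)⁻¹ Eᵢ`, since functions of `A` multiply pointwise on the eigenvalues.
-/

open Matrix

noncomputable section

/-- `E 1, …, E m` are the spectral projections of the real symmetric matrix `A` associated
with its distinct eigenvalues `lam 1, …, lam m`: they are symmetric idempotents, mutually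
orthogonal, summing to the identity, with `A = ∑ i, lam i • E i`, the `lam i` pairwise
distinct and each `E i` nonzero (so each `lam i` really is an eigenvalue). -/
structure SpectralDecomp {n m : ℕ} (A : Matrix (Fin n) (Fin n) ℝ) (lam : Fin m → ℝ)
    (E : Fin m → Matrix (Fin n) (Fin n) ℝ) : Prop where
  symm : ∀ i, (E i).IsSymm
  idem : ∀ i, E i * E i = E i
  mul_eq_zero : ∀ i j, i ≠ j → E i * E j = 0
  sum_eq_one : ∑ i, E i = 1
  eq_sum : A = ∑ i, lam i • E i
  injective : Function.Injective lam
  ne_zero : ∀ i, E i ≠ 0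

theorem Matrix.det_sub_vecMulVec {ι R : Type*} [Fintype ι] [DecidableEq ι] [CommRing R]
    {M : Matrix ι ι R} (hM : IsUnit M.det) (u v : ι → R) :
    (M - vecMulVec u v).det = M.det * (1 - v ⬝ᵥ M⁻¹ *ᵥ u) := by
  rw [sub_eq_add_neg, ← neg_vecMulVec, vecMulVec_eq Unit,
    det_add_replicateCol_mul_replicateRow hM, det_unique (1 + _), Matrix.add_apply, one_apply_eq,
    Matrix.mul_assoc, ← replicateCol_mulVec, replicateRow_mul_replicateCol_apply, mulVec_neg,
    dotProduct_neg, sub_eq_add_neg]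

theorem smul_one_sub_complMat {V : Type} [Fintype V] [DecidableEq V] (A : Matrix V V ℝ)
    (x : ℝ) :
    x • (1 : Matrix V V ℝ) - complMat A
      = (x + 1) • 1 + A - vecMulVec (fun _ => 1) fun _ => 1 := by
  ext i j
  simp only [complMat, Matrix.sub_apply, Matrix.add_apply, Matrix.smul_apply, of_apply,
    vecMulVec_apply, smul_eq_mul]
  ring

namespace SpectralDecomp

variable {n m : ℕ} {A : Matrix (Fin n) (Fin n) ℝ} {lam : Fin m → ℝ}
  {E : Fin m → Matrix (Fin n) (Fin n) ℝ}

theorem sum_smul_mul_sum_smul (hE : SpectralDecomp A lam E) (a b : Fin m → ℝ) :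
    (∑ i, a i • E i) * ∑ i, b i • E i = ∑ i, (a i * b i) • E i := by
  rw [Finset.sum_mul]
  refine Finset.sum_congr rfl fun i _ => ?_
  rw [Finset.mul_sum, Finset.sum_eq_single i]
  · rw [smul_mul_smul_comm, hE.idem]
  · intro j _ hji
    rw [smul_mul_smul_comm, hE.mul_eq_zero i j hji.symm, smul_zero]
  · exact fun h => absurd (Finset.mem_univ i) h

theorem smul_one_add_eq_sum (hE : SpectralDecomp A lam E) (c : ℝ) :
    c • 1 + A = ∑ i, (c + lam i) • E i := by
  simp only [add_smul, Finset.sum_add_distrib, ← Finset.smul_sum, hE.sum_eq_one, ← hE.eq_sum]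

theorem smul_one_add_mul_sum_inv_smul (hE : SpectralDecomp A lam E) {c : ℝ}
    (hc : ∀ i, c + lam i ≠ 0) :
    (c • 1 + A) * ∑ i, (c + lam i)⁻¹ • E i = 1 := by
  rw [hE.smul_one_add_eq_sum, hE.sum_smul_mul_sum_smul, ← hE.sum_eq_one]
  simp only [mul_inv_cancel₀ (hc _), one_smul]

end SpectralDecomp

theorem Matrix.dotProduct_sum_smul_mulVec {ι κ R : Type*} [Fintype ι] [CommSemiring R]
    (u v : ι → R) (s : Finset κ) (a : κ → R) (E : κ → Matrix ι ι R) :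
    u ⬝ᵥ (∑ k ∈ s, a k • E k) *ᵥ v = ∑ k ∈ s, a k * (u ⬝ᵥ E k *ᵥ v) := by
  simp only [sum_mulVec, smul_mulVec, dotProduct_sum, dotProduct_smul, smul_eq_mul]

theorem det_compl_eq_general
    {n m : ℕ} (A : Matrix (Fin n) (Fin n) ℝ) (lam : Fin m → ℝ)
    (E : Fin m → Matrix (Fin n) (Fin n) ℝ)
    (hE : SpectralDecomp A lam E)
    (x : ℝ) (hx : ∀ i, x + 1 + lam i ≠ 0) :
    (x • (1 : Matrix (Fin n) (Fin n) ℝ) - complMat A).det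
      = (-1) ^ n * ((-x - 1) • (1 : Matrix (Fin n) (Fin n) ℝ) - A).det
        * (1 - ∑ i, ((fun _ => (1 : ℝ)) ⬝ᵥ (E i *ᵥ fun _ => (1 : ℝ))) / (x + 1 + lam i)) := by
  have hinv := hE.smul_one_add_mul_sum_inv_smul hx
  have hdet : ((x + 1) • 1 + A).det = (-1) ^ n * ((-x - 1) • 1 - A).det := by
    rw [← neg_neg ((x + 1) • 1 + A), det_neg, Fintype.card_fin]
    congr 3
    module
  rw [smul_one_sub_complMat, det_sub_vecMulVec (isUnit_det_of_right_inverse hinv),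
    inv_eq_right_inv hinv, dotProduct_sum_smul_mulVec, hdet]
  simp only [div_eq_inv_mul]

/-- Lemma 1 (ii). For every real `x` with `x + 1 + λᵢ ≠ 0` for all `i`,
`χ(Ḡ; x) = (-1)ⁿ χ(G; -x-1) · (1 - ∑ᵢ eᵀEᵢe/(x + 1 + λᵢ))`. -/
theorem det_compl_eq
    {n m : ℕ} (A : Matrix (Fin n) (Fin n) ℝ) (lam : Fin m → ℝ)
    (E : Fin m → Matrix (Fin n) (Fin n) ℝ)
    (hA : A.IsAdjMatrix) (hE : SpectralDecomp A lam E)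
    (x : ℝ) (hx : ∀ i, x + 1 + lam i ≠ 0) :
    (x • (1 : Matrix (Fin n) (Fin n) ℝ) - complMat A).det
      = (-1) ^ n * ((-x - 1) • (1 : Matrix (Fin n) (Fin n) ℝ) - A).det
        * (1 - ∑ i, ((fun _ => (1 : ℝ)) ⬝ᵥ (E i *ᵥ fun _ => (1 : ℝ))) / (x + 1 + lam i)) :=
  det_compl_eq_general A lam E hE x hx
end
end
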